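/- arXiv:2003.09767 — 2 statements merged into one kernel-verified Lean document; each statement's English description precedes it below -/
import Mathlib

section
/- Let G be an amenable group. Let E and Y be real Banach spaces with bounded representations u and v of G by invertible operators, let X be a closed subspace of E with u(g)X ⊆ X for all g ∈ G, and assume X (with the restricted representation g ↦ u(g)|_X) is G-complemented in its bidual. Let Y₀₀ be a dense linear subspace of Y with v(g)Y₀₀ ⊆ Y₀₀ for all g, and let Ω : Y₀₀ → E be a trivial G-centralizer; that is, Ω satisfies the centralizer condition (there is C with u(g)(Ωy) − Ω(v(g)y) ∈ X and ‖u(g)(Ωy) − Ω(v(g)y)‖ ≤ C‖y‖ for all g, y ∈ Y₀₀) and Ω = B + L where L : Y₀₀ → E is linear and B : Y₀₀ → X satisfies sup{‖B y‖ : y ∈ Y₀₀, ‖y‖ ≤ 1} < ∞. Then Ω is boundedly equivalent to a linear G-equivariant map: there exists a linear map L' : Y₀₀ → E with u(g)(L' y) = L'(v(g) y) for all g ∈ G and y ∈ Y₀₀, such that Ω y − L' y ∈ X for all y ∈ Y₀₀ and sup{‖Ω y − L' y‖ : y ∈ Y₀₀, ‖y‖ ≤ 1} < ∞. -/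
/-!
Write `Ω = B + L` with `B` bounded and `X`-valued. The coboundary
`Λ g = u g ∘ L ∘ v g⁻¹ - L` equals a centralizer defect of `Ω` plus two values of `B`, so it
takes values in `X` and is bounded uniformly in `g` on the unit ball. For fixed `y`, averaging
`g ↦ Λ g y` against the invariant mean gives a point of `X**`, which the equivariant
projection `P` sends back to some `Q y ∈ X`. Invariance of the mean turns the cocycle identity
`Λ g (v h y) = u h (Λ (h⁻¹ g) y) + Λ h (v h y)` into `Q (v h y) = u h (Q y) + Λ h (v h y)`,
which says exactly that `L + Q` is equivariant; and `Ω - (L + Q) = B - Q` is bounded.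
-/

open NormedSpace

/-- The subspace of bounded real-valued functions on `G` (the domain `ℓ∞(G,ℝ)` of a mean). -/
def bddFuns (G : Type*) : Submodule ℝ (G → ℝ) where
  carrier := {f | ∃ C : ℝ, ∀ g, |f g| ≤ C}
  add_mem' := by
    rintro f g ⟨C, hC⟩ ⟨D, hD⟩
    exact ⟨C + D, fun x => (abs_add_le _ _).trans (add_le_add (hC x) (hD x))⟩
  zero_mem' := ⟨0, fun g => by simp⟩
  smul_mem' := by
    rintro c f ⟨C, hC⟩
    exact ⟨|c| * C, fun x => by
      rw [Pi.smul_apply, smul_eq_mul, abs_mul]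
      exact mul_le_mul_of_nonneg_left (hC x) (abs_nonneg c)⟩

noncomputable section

variable {G : Type*}

def bddFuns.const (c : ℝ) : bddFuns G := ⟨fun _ => c, |c|, fun _ => le_rfl⟩

@[simp]
lemma bddFuns.coe_const (c : ℝ) : ((bddFuns.const c : bddFuns G) : G → ℝ) = fun _ => c := rfl

structure IsMean (m : bddFuns G →ₗ[ℝ] ℝ) : Prop where
  map_one : ∀ f : bddFuns G, (∀ g : G, (f : G → ℝ) g = 1) → m f = 1
  nonneg : ∀ f : bddFuns G, (∀ g : G, 0 ≤ (f : G → ℝ) g) → 0 ≤ m f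

structure IsLeftInvariantMean [Mul G] (m : bddFuns G →ₗ[ℝ] ℝ) : Prop extends IsMean m where
  map_translate : ∀ (g₀ : G) (f f' : bddFuns G),
    (∀ g : G, (f' : G → ℝ) g = (f : G → ℝ) (g₀ * g)) → m f' = m f

namespace IsMean

variable {m : bddFuns G →ₗ[ℝ] ℝ}

lemma map_const (hm : IsMean m) (c : ℝ) : m (bddFuns.const c) = c := by
  have : (bddFuns.const c : bddFuns G) = c • bddFuns.const 1 :=
    Subtype.ext (funext fun _ => (mul_one c).symm)
  rw [this, map_smul, hm.map_one _ fun _ => rfl, smul_eq_mul, mul_one]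

lemma mono (hm : IsMean m) {f f' : bddFuns G} (h : ∀ g, (f : G → ℝ) g ≤ (f' : G → ℝ) g) :
    m f ≤ m f' := by
  have := hm.nonneg (f' - f) fun g => sub_nonneg.mpr (h g)
  rwa [map_sub, sub_nonneg] at this

lemma abs_le (hm : IsMean m) (f : bddFuns G) {K : ℝ} (hf : ∀ g, |(f : G → ℝ) g| ≤ K) :
    |m f| ≤ K := by
  refine _root_.abs_le.mpr ⟨?_, ?_⟩
  · simpa only [hm.map_const] using
      hm.mono (f := bddFuns.const (-K)) fun g => neg_le_of_abs_le (hf g)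
  · simpa only [hm.map_const] using
      hm.mono (f' := bddFuns.const K) fun g => le_of_abs_le (hf g)

end IsMean

variable {Z Z' : Type*} [NormedAddCommGroup Z] [NormedSpace ℝ Z]
  [NormedAddCommGroup Z'] [NormedSpace ℝ Z']

def bddFamilies (G Z : Type*) [NormedAddCommGroup Z] [NormedSpace ℝ Z] :
    Submodule ℝ (G → Z) where
  carrier := {F | ∃ K : ℝ, ∀ g, ‖F g‖ ≤ K}
  add_mem' := by
    rintro F F' ⟨K, hK⟩ ⟨K', hK'⟩
    exact ⟨K + K', fun g => (norm_add_le _ _).trans (add_le_add (hK g) (hK' g))⟩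
  zero_mem' := ⟨0, fun g => by simp⟩
  smul_mem' := by
    rintro c F ⟨K, hK⟩
    exact ⟨‖c‖ * K, fun g => by
      rw [Pi.smul_apply, norm_smul]
      exact mul_le_mul_of_nonneg_left (hK g) (norm_nonneg c)⟩

lemma abs_apply_le_of_norm_le (φ : StrongDual ℝ Z) {z : Z} {K : ℝ} (hz : ‖z‖ ≤ K) :
    |φ z| ≤ ‖φ‖ * K :=
  (φ.le_opNorm z).trans (mul_le_mul_of_nonneg_left hz (norm_nonneg φ))

def bddFamilies.pairing (F : bddFamilies G Z) : StrongDual ℝ Z →ₗ[ℝ] bddFuns G where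
  toFun φ := ⟨fun g => φ ((F : G → Z) g), by
    obtain ⟨K, hK⟩ := F.2
    exact ⟨‖φ‖ * K, fun g => abs_apply_le_of_norm_le φ (hK g)⟩⟩
  map_add' _ _ := rfl
  map_smul' _ _ := rfl

@[simp]
lemma bddFamilies.coe_pairing (F : bddFamilies G Z) (φ : StrongDual ℝ Z) :
    ((bddFamilies.pairing F φ : bddFuns G) : G → ℝ) = fun g => φ ((F : G → Z) g) := rfl

lemma IsMean.exists_bound_pairing {m : bddFuns G →ₗ[ℝ] ℝ} (hm : IsMean m)
    (F : bddFamilies G Z) : ∃ K, ∀ φ, ‖(m ∘ₗ bddFamilies.pairing F) φ‖ ≤ K * ‖φ‖ := by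
  obtain ⟨K, hK⟩ := F.2
  exact ⟨K, fun φ => by
    rw [Real.norm_eq_abs, mul_comm]
    exact hm.abs_le _ fun g => abs_apply_le_of_norm_le φ (hK g)⟩

def bidualMean {m : bddFuns G →ₗ[ℝ] ℝ} (hm : IsMean m) :
    bddFamilies G Z →ₗ[ℝ] StrongDual ℝ (StrongDual ℝ Z) where
  toFun F := (m ∘ₗ bddFamilies.pairing F).mkContinuousOfExistsBound (hm.exists_bound_pairing F)
  map_add' F F' := by
    ext φ
    change m _ = m _ + m _
    rw [← map_add]
    exact congrArg m (Subtype.ext (funext fun g => map_add φ _ _))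
  map_smul' c F := by
    ext φ
    change m _ = c • m _
    rw [← map_smul]
    exact congrArg m (Subtype.ext (funext fun g => map_smul φ c _))

variable {m : bddFuns G →ₗ[ℝ] ℝ}

lemma bidualMean_apply (hm : IsMean m) (F : bddFamilies G Z) (φ : StrongDual ℝ Z) :
    bidualMean hm F φ = m (bddFamilies.pairing F φ) := rfl

lemma norm_bidualMean_le [Nonempty G] (hm : IsMean m) (F : bddFamilies G Z) {K : ℝ}
    (hK : ∀ g, ‖(F : G → Z) g‖ ≤ K) : ‖bidualMean hm F‖ ≤ K := by
  refine ContinuousLinearMap.opNorm_le_bound _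
    ((norm_nonneg _).trans (hK (Classical.arbitrary G))) fun φ => ?_
  rw [bidualMean_apply, Real.norm_eq_abs, mul_comm]
  exact hm.abs_le _ fun g => abs_apply_le_of_norm_le φ (hK g)

def doubleTranspose (T : Z →L[ℝ] Z') :
    StrongDual ℝ (StrongDual ℝ Z) →L[ℝ] StrongDual ℝ (StrongDual ℝ Z') :=
  (ContinuousLinearMap.compL ℝ (StrongDual ℝ Z') (StrongDual ℝ Z) ℝ).flip
    ((ContinuousLinearMap.compL ℝ Z Z' ℝ).flip T)

lemma doubleTranspose_apply (T : Z →L[ℝ] Z') (Ψ : StrongDual ℝ (StrongDual ℝ Z))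
    (φ : StrongDual ℝ Z') : doubleTranspose T Ψ φ = Ψ (φ.comp T) := rfl

lemma IsLeftInvariantMean.bidualMean_eq_of_eq_translate [Mul G] (hm : IsLeftInvariantMean m)
    {h : G} {T : Z →L[ℝ] Z} {ξ : Z} {F F' : bddFamilies G Z}
    (hF : ∀ g, (F' : G → Z) g = T ((F : G → Z) (h * g)) + ξ) :
    bidualMean hm.toIsMean F' =
      doubleTranspose T (bidualMean hm.toIsMean F) + inclusionInDoubleDual ℝ Z ξ := by
  ext φ
  rw [add_apply, doubleTranspose_apply, dual_def, bidualMean_apply, bidualMean_apply]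
  have htranslate :
      m (bddFamilies.pairing F' φ - bddFuns.const (φ ξ)) = m (bddFamilies.pairing F (φ.comp T)) :=
    hm.map_translate h _ _ fun g => by simp [hF g]
  rw [map_sub, hm.map_const] at htranslate
  linarith

end

lemma LinearMap.bound_of_closedBall_bound {V W : Type*} [NormedAddCommGroup V]
    [NormedSpace ℝ V] [NormedAddCommGroup W] [NormedSpace ℝ W] (f : V →ₗ[ℝ] W) {r c : ℝ}
    (hr : 0 < r) (h : ∀ z, ‖z‖ ≤ r → ‖f z‖ ≤ c) (z : V) : ‖f z‖ ≤ c / r * ‖z‖ := by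
  rcases eq_or_ne z 0 with rfl | hz
  · simp
  have hz' : 0 < ‖z‖ := norm_pos_iff.mpr hz
  have hscaled : ‖(r / ‖z‖) • z‖ = r := by
    rw [norm_smul, Real.norm_of_nonneg (by positivity), div_mul_cancel₀ _ hz'.ne']
  calc ‖f z‖ = ‖z‖ / r * ‖f ((r / ‖z‖) • z)‖ := by
        rw [map_smul, norm_smul, Real.norm_of_nonneg (by positivity)]
        field_simp
    _ ≤ ‖z‖ / r * c := mul_le_mul_of_nonneg_left (h _ hscaled.le) (by positivity)
    _ = c / r * ‖z‖ := by ring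

section Coboundary

variable {G : Type*} [Group G] {E V : Type*} [NormedAddCommGroup E] [NormedSpace ℝ E]
  [AddCommGroup V] [Module ℝ V]

/-- The coboundary `g ↦ g • L - L` of `L` for the action `g • L = u g ∘ L ∘ ρ g⁻¹`. -/
def coboundary (u : G → E →L[ℝ] E) (ρ : G → V →ₗ[ℝ] V) (L : V →ₗ[ℝ] E) (g : G) :
    V →ₗ[ℝ] E :=
  (u g : E →ₗ[ℝ] E) ∘ₗ L ∘ₗ ρ g⁻¹ - L

variable {u : G → E →L[ℝ] E} {ρ : G → V →ₗ[ℝ] V} {L : V →ₗ[ℝ] E}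

lemma coboundary_apply (g : G) (y : V) : coboundary u ρ L g y = u g (L (ρ g⁻¹ y)) - L y := rfl

lemma coboundary_apply_rho (hu : ∀ g h, u (g * h) = (u g).comp (u h))
    (hρ : ∀ g h, ρ (g * h) = ρ g ∘ₗ ρ h) (hρinv : ∀ g y, ρ g⁻¹ (ρ g y) = y) (g h : G) (y : V) :
    coboundary u ρ L g (ρ h y) =
      u h (coboundary u ρ L (h⁻¹ * g) y) + coboundary u ρ L h (ρ h y) := by
  have hρ' : ρ g⁻¹ (ρ h y) = ρ (h⁻¹ * g)⁻¹ y := by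
    rw [mul_inv_rev, inv_inv, hρ, LinearMap.comp_apply]
  have hu' : u h (u (h⁻¹ * g) (L (ρ (h⁻¹ * g)⁻¹ y))) = u g (L (ρ (h⁻¹ * g)⁻¹ y)) := by
    rw [← ContinuousLinearMap.comp_apply, ← hu, mul_inv_cancel_left]
  simp only [coboundary_apply, hρinv, map_sub, hρ', hu']
  abel

lemma coboundary_apply_eq (Ω : V → E) (hρinv' : ∀ g y, ρ g (ρ g⁻¹ y) = y) (g : G) (y : V) :
    coboundary u ρ L g y = (u g (Ω (ρ g⁻¹ y)) - Ω (ρ g (ρ g⁻¹ y))) -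
      u g (Ω (ρ g⁻¹ y) - L (ρ g⁻¹ y)) + (Ω y - L y) := by
  rw [coboundary_apply, hρinv', map_sub]
  abel

lemma coboundary_mem {X : Submodule ℝ E} (hXinv : ∀ g, ∀ x ∈ X, u g x ∈ X) (Ω : V → E)
    (hρinv' : ∀ g y, ρ g (ρ g⁻¹ y) = y) (hcent : ∀ g z, u g (Ω z) - Ω (ρ g z) ∈ X)
    (hΩL : ∀ y, Ω y - L y ∈ X) (g : G) (y : V) : coboundary u ρ L g y ∈ X := by
  rw [coboundary_apply_eq Ω hρinv']
  exact X.add_mem (X.sub_mem (hcent _ _) (hXinv g _ (hΩL _))) (hΩL y)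

end Coboundary

lemma exists_norm_coboundary_le {G : Type*} [Group G] {E V : Type*} [NormedAddCommGroup E]
    [NormedSpace ℝ E] [NormedAddCommGroup V] [NormedSpace ℝ V] {u : G → E →L[ℝ] E}
    {ρ : G → V →ₗ[ℝ] V} {L : V →ₗ[ℝ] E} (Ω : V → E) (hρinv' : ∀ g y, ρ g (ρ g⁻¹ y) = y)
    {Mu Mv C Cb : ℝ} (huM : ∀ g, ‖u g‖ ≤ Mu) (hρM : ∀ g y, ‖ρ g y‖ ≤ Mv * ‖y‖)
    (hcent : ∀ g z, ‖u g (Ω z) - Ω (ρ g z)‖ ≤ C * ‖z‖)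
    (hΩL : ∀ y, ‖y‖ ≤ 1 → ‖Ω y - L y‖ ≤ Cb) :
    ∃ K, ∀ g y, ‖coboundary u ρ L g y‖ ≤ K * ‖y‖ := by
  -- On the ball of radius `M⁻¹`, both `y` and `ρ g⁻¹ y` lie in the unit ball.
  set M := max Mv 1
  have hM : 0 < M := lt_max_of_lt_right one_pos
  refine ⟨(|C| + Mu * Cb + Cb) / M⁻¹, fun g =>
    LinearMap.bound_of_closedBall_bound _ (inv_pos.mpr hM) fun y hy => ?_⟩
  have hy1 : ‖y‖ ≤ 1 := hy.trans (inv_le_one_of_one_le₀ (le_max_right _ _))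
  have hz1 : ‖ρ g⁻¹ y‖ ≤ 1 :=
    calc ‖ρ g⁻¹ y‖ ≤ M * ‖y‖ :=
          (hρM _ _).trans (mul_le_mul_of_nonneg_right (le_max_left _ _) (norm_nonneg _))
      _ ≤ M * M⁻¹ := mul_le_mul_of_nonneg_left hy hM.le
      _ = 1 := mul_inv_cancel₀ hM.ne'
  have hdefect : ‖u g (Ω (ρ g⁻¹ y)) - Ω (ρ g (ρ g⁻¹ y))‖ ≤ |C| :=
    (hcent _ _).trans ((mul_le_mul_of_nonneg_right (le_abs_self C) (norm_nonneg _)).trans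
      (mul_le_of_le_one_right (abs_nonneg C) hz1))
  have htranslate : ‖u g (Ω (ρ g⁻¹ y) - L (ρ g⁻¹ y))‖ ≤ Mu * Cb :=
    ((u g).le_opNorm _).trans
      (mul_le_mul (huM g) (hΩL _ hz1) (norm_nonneg _) ((norm_nonneg _).trans (huM g)))
  rw [coboundary_apply_eq Ω hρinv']
  calc _ ≤ ‖u g (Ω (ρ g⁻¹ y)) - Ω (ρ g (ρ g⁻¹ y))‖ +
          ‖u g (Ω (ρ g⁻¹ y) - L (ρ g⁻¹ y))‖ + ‖Ω y - L y‖ :=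
        (norm_add_le _ _).trans (add_le_add_left (norm_sub_le _ _) _)
    _ ≤ |C| + Mu * Cb + Cb := add_le_add (add_le_add hdefect htranslate) (hΩL y hy1)

theorem exists_primitive_of_bounded_cocycle {G : Type*} [Group G]
    {m : bddFuns G →ₗ[ℝ] ℝ} (hm : IsLeftInvariantMean m) {Z V : Type*} [NormedAddCommGroup Z]
    [NormedSpace ℝ Z] [AddCommGroup V] [Module ℝ V] (ρ : G → V →ₗ[ℝ] V) (w : G → Z →L[ℝ] Z)
    (P : StrongDual ℝ (StrongDual ℝ Z) →L[ℝ] Z) (hPj : ∀ z, P (inclusionInDoubleDual ℝ Z z) = z)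
    (hPw : ∀ h Ψ, P (doubleTranspose (w h) Ψ) = w h (P Ψ)) (Λ : G → V →ₗ[ℝ] Z)
    (hΛbdd : ∀ y, ∃ K, ∀ g, ‖Λ g y‖ ≤ K)
    (hΛ : ∀ g h y, Λ g (ρ h y) = w h (Λ (h⁻¹ * g) y) + Λ h (ρ h y)) :
    ∃ Q : V →ₗ[ℝ] Z, (∀ h y, Q (ρ h y) = w h (Q y) + Λ h (ρ h y)) ∧
      ∃ D, ∀ y K, (∀ g, ‖Λ g y‖ ≤ K) → ‖Q y‖ ≤ D * K := by
  -- `StrongDual ℝ Z` must carry its normed structure for `P.bound` to elaborate.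
  let _ : SeminormedAddCommGroup (StrongDual ℝ Z) := inferInstance
  let _ : NormedSpace ℝ (StrongDual ℝ Z) := inferInstance
  obtain ⟨D, hD, hPD⟩ := P.bound
  let F : V →ₗ[ℝ] bddFamilies G Z := (LinearMap.pi Λ).codRestrict _ hΛbdd
  refine ⟨(P : _ →ₗ[ℝ] Z) ∘ₗ bidualMean hm.toIsMean ∘ₗ F, fun h y => ?_, D, fun y K hK => ?_⟩
  · have hmean := hm.bidualMean_eq_of_eq_translate (h := h⁻¹) (T := w h)
      (F := F y) (F' := F (ρ h y)) fun g => hΛ g h y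
    simp only [LinearMap.comp_apply, ContinuousLinearMap.coe_coe]
    rw [hmean, map_add, hPw, hPj]
  · exact (hPD _).trans (mul_le_mul_of_nonneg_left (norm_bidualMean_le hm.toIsMean _ hK) hD.le)

theorem exists_equivariant_of_trivial_centralizer {G : Type*} [Group G]
    {m : bddFuns G →ₗ[ℝ] ℝ} (hm : IsLeftInvariantMean m) {E V : Type*} [NormedAddCommGroup E]
    [NormedSpace ℝ E] [NormedAddCommGroup V] [NormedSpace ℝ V]
    (u : G → E →L[ℝ] E) (ρ : G → V →ₗ[ℝ] V) (hu : ∀ g h, u (g * h) = (u g).comp (u h))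
    (hρ : ∀ g h, ρ (g * h) = ρ g ∘ₗ ρ h) (hρinv : ∀ g y, ρ g⁻¹ (ρ g y) = y)
    (hρinv' : ∀ g y, ρ g (ρ g⁻¹ y) = y) {Mu Mv : ℝ} (huM : ∀ g, ‖u g‖ ≤ Mu)
    (hρM : ∀ g y, ‖ρ g y‖ ≤ Mv * ‖y‖) (X : Submodule ℝ E) (w : G → X →L[ℝ] X)
    (hw : ∀ g x, (w g x : E) = u g x) (P : StrongDual ℝ (StrongDual ℝ X) →L[ℝ] X)
    (hPj : ∀ x, P (inclusionInDoubleDual ℝ X x) = x)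
    (hPw : ∀ h Ψ, P (doubleTranspose (w h) Ψ) = w h (P Ψ)) (Ω : V → E) {C : ℝ}
    (hcent : ∀ g z, u g (Ω z) - Ω (ρ g z) ∈ X ∧ ‖u g (Ω z) - Ω (ρ g z)‖ ≤ C * ‖z‖)
    (L : V →ₗ[ℝ] E) {Cb : ℝ} (hL : ∀ y, Ω y - L y ∈ X ∧ (‖y‖ ≤ 1 → ‖Ω y - L y‖ ≤ Cb)) :
    ∃ L' : V →ₗ[ℝ] E, (∀ g y, u g (L' y) = L' (ρ g y)) ∧ (∀ y, Ω y - L' y ∈ X) ∧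
      ∃ D, ∀ y, ‖y‖ ≤ 1 → ‖Ω y - L' y‖ ≤ D := by
  have hXinv : ∀ g, ∀ x ∈ X, u g x ∈ X := fun g x hx => hw g ⟨x, hx⟩ ▸ (w g ⟨x, hx⟩).2
  obtain ⟨K, hK⟩ := exists_norm_coboundary_le Ω hρinv' huM hρM (fun g z => (hcent g z).2)
    fun y => (hL y).2
  let Λ : G → V →ₗ[ℝ] X := fun g => (coboundary u ρ L g).codRestrict X
    (coboundary_mem hXinv Ω hρinv' (fun g z => (hcent g z).1) (fun y => (hL y).1) g)
  obtain ⟨Q, hQρ, D, hQD⟩ := exists_primitive_of_bounded_cocycle hm ρ w P hPj hPw Λ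
    (fun y => ⟨K * ‖y‖, fun g => hK g y⟩) fun g h y => Subtype.ext <| by
      simp only [Λ, LinearMap.codRestrict_apply, Submodule.coe_add, hw]
      exact coboundary_apply_rho hu hρ hρinv g h y
  have hΩL' : ∀ y, Ω y - (L + X.subtype ∘ₗ Q) y = (Ω y - L y) - Q y := fun y => by
    simp only [LinearMap.add_apply, LinearMap.comp_apply, Submodule.subtype_apply]
    abel
  refine ⟨L + X.subtype ∘ₗ Q, fun g y => ?_, fun y => ?_, Cb + D * |K|, fun y hy => ?_⟩
  · have hQ : (Q (ρ g y) : E) = u g (Q y) + (u g (L y) - L (ρ g y)) := by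
      rw [hQρ, Submodule.coe_add, hw, LinearMap.codRestrict_apply, coboundary_apply, hρinv]
    simp only [LinearMap.add_apply, LinearMap.comp_apply, Submodule.subtype_apply, hQ, map_add]
    abel
  · rw [hΩL']
    exact X.sub_mem (hL y).1 (Q y).2
  · have hΛy : ∀ g, ‖Λ g y‖ ≤ |K| := fun g =>
      (hK g y).trans ((mul_le_mul_of_nonneg_right (le_abs_self K) (norm_nonneg y)).trans
        (mul_le_of_le_one_right (abs_nonneg K) hy))
    rw [hΩL']
    exact (norm_sub_le _ _).trans (add_le_add ((hL y).2 hy) (hQD y _ hΛy))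

theorem stmt_8_general {G : Type*} [Group G]
    {E Y : Type*} [NormedAddCommGroup E] [NormedSpace ℝ E]
    [NormedAddCommGroup Y] [NormedSpace ℝ Y]
    -- amenability of G: existence of a left-invariant mean on ℓ∞(G,ℝ)
    (hamen : ∃ m : bddFuns G →ₗ[ℝ] ℝ,
      (∀ f : bddFuns G, (∀ g : G, (f : G → ℝ) g = 1) → m f = 1) ∧
      (∀ f : bddFuns G, (∀ g : G, 0 ≤ (f : G → ℝ) g) → 0 ≤ m f) ∧
      (∀ (g₀ : G) (f f' : bddFuns G),
        (∀ g : G, (f' : G → ℝ) g = (f : G → ℝ) (g₀ * g)) → m f' = m f))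
    -- bounded representations by invertible operators
    (u : G → E →L[ℝ] E) (v : G → Y →L[ℝ] Y)
    (hu : ∀ g h : G, u (g * h) = (u g).comp (u h))
    (hv : ∀ g h : G, v (g * h) = (v g).comp (v h))
    (hvinv : ∀ g : G, (v g⁻¹).comp (v g) = ContinuousLinearMap.id ℝ Y)
    (hvinv' : ∀ g : G, (v g).comp (v g⁻¹) = ContinuousLinearMap.id ℝ Y)
    (Mu : ℝ) (huM : ∀ g : G, ‖u g‖ ≤ Mu) (Mv : ℝ) (hvM : ∀ g : G, ‖v g‖ ≤ Mv)
    -- the closed invariant subspace X of E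
    (X : Submodule ℝ E)
    (hXinv : ∀ g : G, ∀ x ∈ X, u g x ∈ X)
    -- X (with the restricted representation) is G-complemented in its bidual
    (hcompl : ∃ P : StrongDual ℝ (StrongDual ℝ ↥X) →L[ℝ] ↥X,
      (∀ x : ↥X, P (inclusionInDoubleDual ℝ ↥X x) = x) ∧
      ∀ (g : G) (wg : ↥X →L[ℝ] ↥X), (∀ x : ↥X, (wg x : E) = u g (x : E)) →
        ∀ wgss : StrongDual ℝ (StrongDual ℝ ↥X) →L[ℝ] StrongDual ℝ (StrongDual ℝ ↥X),
          (∀ (Φ : StrongDual ℝ (StrongDual ℝ ↥X)) (φ : StrongDual ℝ ↥X), wgss Φ φ = Φ (φ.comp wg)) →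
          ∀ Φ : StrongDual ℝ (StrongDual ℝ ↥X), P (wgss Φ) = wg (P Φ))
    -- the dense invariant subspace Y₀₀ of Y
    (Y₀₀ : Submodule ℝ Y)
    (hYinv : ∀ g : G, ∀ y ∈ Y₀₀, v g y ∈ Y₀₀)
    -- Ω is a G-centralizer
    (Ω : ↥Y₀₀ → E) (C : ℝ)
    (hcent : ∀ (g : G) (y y' : ↥Y₀₀), (y' : Y) = v g (y : Y) →
      u g (Ω y) - Ω y' ∈ X ∧ ‖u g (Ω y) - Ω y'‖ ≤ C * ‖(y : Y)‖)
    -- Ω is trivial: Ω = B + L with L linear and B bounded with values in X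
    (htriv : ∃ (L : ↥Y₀₀ →ₗ[ℝ] E) (Cb : ℝ), ∀ y : ↥Y₀₀,
      Ω y - L y ∈ X ∧ (‖(y : Y)‖ ≤ 1 → ‖Ω y - L y‖ ≤ Cb)) :
    ∃ L' : ↥Y₀₀ →ₗ[ℝ] E,
      (∀ (g : G) (y y' : ↥Y₀₀), (y' : Y) = v g (y : Y) → u g (L' y) = L' y') ∧
      (∀ y : ↥Y₀₀, Ω y - L' y ∈ X) ∧
      (∃ D : ℝ, ∀ y : ↥Y₀₀, ‖(y : Y)‖ ≤ 1 → ‖Ω y - L' y‖ ≤ D) := by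
  obtain ⟨m, hm₁, hm₂, hm₃⟩ := hamen
  obtain ⟨P, hPj, hPw⟩ := hcompl
  obtain ⟨L, Cb, hL⟩ := htriv
  let vY : G → Y₀₀ →ₗ[ℝ] Y₀₀ := fun g => (v g : Y →ₗ[ℝ] Y).restrict (hYinv g)
  let w : G → X →L[ℝ] X := fun g =>
    ((u g).comp X.subtypeL).codRestrict X fun x => hXinv g x x.2
  obtain ⟨L', hL'v, hL'X, hL'D⟩ := exists_equivariant_of_trivial_centralizer
    ⟨⟨hm₁, hm₂⟩, hm₃⟩ u vY hu
    (fun g h => LinearMap.ext fun y => Subtype.ext (by simp [vY, hv]))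
    (fun g y => Subtype.ext (ContinuousLinearMap.ext_iff.mp (hvinv g) y))
    (fun g y => Subtype.ext (ContinuousLinearMap.ext_iff.mp (hvinv' g) y))
    huM (fun g y => ((v g).le_opNorm y).trans
      (mul_le_mul_of_nonneg_right (hvM g) (norm_nonneg _)))
    X w (fun _ _ => rfl) P hPj (fun h => hPw h (w h) (fun _ => rfl) _ fun _ _ => rfl) Ω
    (fun g z => hcent g z (vY g z) rfl) L hL
  refine ⟨L', fun g y y' hy' => ?_, hL'X, hL'D⟩
  rw [hL'v, show vY g y = y' from Subtype.ext hy'.symm]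

/-- if `G` is an amenable group, `X` is `G`-complemented in its bidual,
and `Ω : Y₀₀ → E` is a trivial `G`-centralizer, then `Ω` is boundedly equivalent to
a linear `G`-equivariant map. -/
theorem stmt_8 {G : Type*} [Group G]
    {E Y : Type*} [NormedAddCommGroup E] [NormedSpace ℝ E] [CompleteSpace E]
    [NormedAddCommGroup Y] [NormedSpace ℝ Y] [CompleteSpace Y]
    -- amenability of G: existence of a left-invariant mean on ℓ∞(G,ℝ)
    (hamen : ∃ m : bddFuns G →ₗ[ℝ] ℝ,
      (∀ f : bddFuns G, (∀ g : G, (f : G → ℝ) g = 1) → m f = 1) ∧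
      (∀ f : bddFuns G, (∀ g : G, 0 ≤ (f : G → ℝ) g) → 0 ≤ m f) ∧
      (∀ (g₀ : G) (f f' : bddFuns G),
        (∀ g : G, (f' : G → ℝ) g = (f : G → ℝ) (g₀ * g)) → m f' = m f))
    -- bounded representations by invertible operators
    (u : G → E →L[ℝ] E) (v : G → Y →L[ℝ] Y)
    (hu : ∀ g h : G, u (g * h) = (u g).comp (u h))
    (hv : ∀ g h : G, v (g * h) = (v g).comp (v h))
    (huinv : ∀ g : G, (u g⁻¹).comp (u g) = ContinuousLinearMap.id ℝ E)
    (huinv' : ∀ g : G, (u g).comp (u g⁻¹) = ContinuousLinearMap.id ℝ E)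
    (hvinv : ∀ g : G, (v g⁻¹).comp (v g) = ContinuousLinearMap.id ℝ Y)
    (hvinv' : ∀ g : G, (v g).comp (v g⁻¹) = ContinuousLinearMap.id ℝ Y)
    (Mu : ℝ) (huM : ∀ g : G, ‖u g‖ ≤ Mu) (Mv : ℝ) (hvM : ∀ g : G, ‖v g‖ ≤ Mv)
    -- the closed invariant subspace X of E
    (X : Submodule ℝ E) (hXc : IsClosed (X : Set E))
    (hXinv : ∀ g : G, ∀ x ∈ X, u g x ∈ X)
    -- X (with the restricted representation) is G-complemented in its bidual
    (hcompl : ∃ P : StrongDual ℝ (StrongDual ℝ ↥X) →L[ℝ] ↥X,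
      (∀ x : ↥X, P (inclusionInDoubleDual ℝ ↥X x) = x) ∧
      ∀ (g : G) (wg : ↥X →L[ℝ] ↥X), (∀ x : ↥X, (wg x : E) = u g (x : E)) →
        ∀ wgss : StrongDual ℝ (StrongDual ℝ ↥X) →L[ℝ] StrongDual ℝ (StrongDual ℝ ↥X),
          (∀ (Φ : StrongDual ℝ (StrongDual ℝ ↥X)) (φ : StrongDual ℝ ↥X), wgss Φ φ = Φ (φ.comp wg)) →
          ∀ Φ : StrongDual ℝ (StrongDual ℝ ↥X), P (wgss Φ) = wg (P Φ))
    -- the dense invariant subspace Y₀₀ of Y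
    (Y₀₀ : Submodule ℝ Y) (hdense : Dense (Y₀₀ : Set Y))
    (hYinv : ∀ g : G, ∀ y ∈ Y₀₀, v g y ∈ Y₀₀)
    -- Ω is a G-centralizer
    (Ω : ↥Y₀₀ → E) (C : ℝ)
    (hcent : ∀ (g : G) (y y' : ↥Y₀₀), (y' : Y) = v g (y : Y) →
      u g (Ω y) - Ω y' ∈ X ∧ ‖u g (Ω y) - Ω y'‖ ≤ C * ‖(y : Y)‖)
    -- Ω is trivial: Ω = B + L with L linear and B bounded with values in X
    (htriv : ∃ (L : ↥Y₀₀ →ₗ[ℝ] E) (Cb : ℝ), ∀ y : ↥Y₀₀,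
      Ω y - L y ∈ X ∧ (‖(y : Y)‖ ≤ 1 → ‖Ω y - L y‖ ≤ Cb)) :
    ∃ L' : ↥Y₀₀ →ₗ[ℝ] E,
      (∀ (g : G) (y y' : ↥Y₀₀), (y' : Y) = v g (y : Y) → u g (L' y) = L' y') ∧
      (∀ y : ↥Y₀₀, Ω y - L' y ∈ X) ∧
      (∃ D : ℝ, ∀ y : ↥Y₀₀, ‖(y : Y)‖ ≤ 1 → ‖Ω y - L' y‖ ≤ D) :=
  stmt_8_general hamen u v hu hv hvinv hvinv' Mu huM Mv hvM X hXinv hcompl Y₀₀ hYinv Ω C hcent htriv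
end

section
/- Let (S, μ) be a σ-finite measure space, 1 ≤ p < ∞, and let Z_p(μ) = {(x, f) ∈ L⁰(μ) × L_p(μ) : x − K f ∈ L_p(μ)} be the Kalton–Peck twisted sum, equipped with the quasi-norm N(x, f) = ‖x − K f‖_p + ‖f‖_p. Let T f = ε·w^{1/p}·(f∘φ) be a Banach–Lamperti operator on L_p(μ), and T̄ its extension to L⁰(μ) by the same formula. Then the map Λ_T(x, f) = (T̄ x + (1/p)·(log w)·(T f), T f), with the convention that (log w)·(T f) is 0 wherever T f vanishes, maps Z_p(μ) into Z_p(μ) and preserves the quasi-norm exactly: N(Λ_T(x, f)) = N(x, f) for every (x, f) ∈ Z_p(μ). (This is the isometric extension to Z_p of the isometry T of L_p witnessing that the isometry group of L_p extends as an isometry group acting on the Kalton–Peck space, with derivation d(T) = −(1/p)(log w)·T.) -/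
open MeasureTheory
open scoped ENNReal

/-!
A Banach–Lamperti operator `T f = ε · w^{1/p} · (f ∘ φ)` is an isometry of `L_p` because
`|T f|^p = w · |f ∘ φ|^p` and `w` is the density that pulls `μ` back along `φ`. On `T f ≠ 0`,
`log |T f| = (1/p) log w + log |f ∘ φ|`, so the Kalton–Peck map satisfies
`K (T f) = T (K f) + (1/p) (log w) · T f` (using `‖T f‖_p = ‖f‖_p`). Hence the first coordinate
of `Λ_T(x, f)` minus `K (T f)` is `T (x - K f)`, and both summands of the quasi-norm are preserved.
-/

/-- The Kalton–Peck map `K f = f · log(|f| / ‖f‖_p)`, defined pointwise (with the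
conventions `0·log 0 = 0` and `K 0 = 0`, automatic here since `Real.log 0 = 0`). -/
noncomputable def kaltonPeck {S : Type*} [MeasurableSpace S] (p : ℝ) (μ : Measure S)
    (f : S → ℝ) : S → ℝ :=
  fun s => f s * Real.log (|f s| / (eLpNorm f (ENNReal.ofReal p) μ).toReal)

section

variable {S : Type*} [MeasurableSpace S]

structure IsLampertiWeight (μ : Measure S) (φ : S → S) (w : S → ℝ) : Prop where
  measurable_map : Measurable φ
  measurable : Measurable w
  nonneg : ∀ s, 0 ≤ w s
  lintegral_comp_mul : ∀ g : S → ℝ≥0∞, Measurable g →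
    ∫⁻ s, g (φ s) * ENNReal.ofReal (w s) ∂μ = ∫⁻ s, g s ∂μ

noncomputable def lamperti (p : ℝ) (φ : S → S) (w ε g : S → ℝ) : S → ℝ :=
  fun s => ε s * w s ^ (1 / p) * g (φ s)

theorem enorm_mul_rpow_one_div_rpow {p e w a : ℝ} (hp : 0 < p) (he : |e| = 1)
    (hw : 0 ≤ w) : ‖e * w ^ (1 / p) * a‖ₑ ^ p = ‖a‖ₑ ^ p * ENNReal.ofReal w := by
  rw [← ofReal_norm, ← ofReal_norm, Real.norm_eq_abs, Real.norm_eq_abs,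
    ENNReal.ofReal_rpow_of_nonneg (abs_nonneg _) hp.le,
    ENNReal.ofReal_rpow_of_nonneg (abs_nonneg _) hp.le, ← ENNReal.ofReal_mul (by positivity),
    abs_mul, abs_mul, he, one_mul, abs_of_nonneg (Real.rpow_nonneg hw _),
    Real.mul_rpow (Real.rpow_nonneg hw _) (abs_nonneg _), ← Real.rpow_mul hw,
    one_div_mul_cancel hp.ne', Real.rpow_one, mul_comm]

namespace IsLampertiWeight

variable {μ : Measure S} {φ : S → S} {w : S → ℝ}

theorem ae_eq_zero_or_comp (h : IsLampertiWeight μ φ w) {P : S → Prop} (hP : ∀ᵐ t ∂μ, P t) :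
    ∀ᵐ s ∂μ, w s = 0 ∨ P (φ s) := by
  set A := toMeasurable μ {t | ¬P t}
  have hA : MeasurableSet A := measurableSet_toMeasurable μ _
  have hA0 : μ A = 0 := by rw [measure_toMeasurable]; exact hP
  have hint := h.lintegral_comp_mul (A.indicator 1) (measurable_one.indicator hA)
  rw [lintegral_indicator_one hA, hA0] at hint
  have hmeas : Measurable fun s => A.indicator 1 (φ s) * ENNReal.ofReal (w s) :=
    ((measurable_one.indicator hA).comp h.measurable_map).mul h.measurable.ennreal_ofReal
  filter_upwards [(lintegral_eq_zero_iff hmeas).mp hint] with s hs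
  by_cases hsA : φ s ∈ A
  · left
    simp only [Set.indicator_of_mem hsA, Pi.one_apply, one_mul, Pi.zero_apply,
      ENNReal.ofReal_eq_zero] at hs
    exact le_antisymm hs (h.nonneg s)
  · exact Or.inr (not_not.mp fun hPs => hsA (subset_toMeasurable μ _ hPs))

theorem lintegral_comp_mul_of_aemeasurable (h : IsLampertiWeight μ φ w) {g : S → ℝ≥0∞}
    (hg : AEMeasurable g μ) : ∫⁻ s, g (φ s) * ENNReal.ofReal (w s) ∂μ = ∫⁻ s, g s ∂μ := calc
  _ = ∫⁻ s, hg.mk g (φ s) * ENNReal.ofReal (w s) ∂μ := by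
    refine lintegral_congr_ae ?_
    filter_upwards [h.ae_eq_zero_or_comp hg.ae_eq_mk] with s hs
    rcases hs with hw | hg
    · simp [hw]
    · rw [hg]
  _ = ∫⁻ s, hg.mk g s ∂μ := h.lintegral_comp_mul _ hg.measurable_mk
  _ = ∫⁻ s, g s ∂μ := lintegral_congr_ae hg.ae_eq_mk.symm

variable {p : ℝ} {ε : S → ℝ}

theorem lamperti_congr_ae (h : IsLampertiWeight μ φ w) (hp : p ≠ 0) {g g' : S → ℝ}
    (hg : g =ᵐ[μ] g') : lamperti p φ w ε g =ᵐ[μ] lamperti p φ w ε g' := by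
  filter_upwards [h.ae_eq_zero_or_comp hg] with s hs
  rcases hs with hw | hg
  · simp [lamperti, hw, Real.zero_rpow (inv_ne_zero hp)]
  · simp [lamperti, hg]

theorem aemeasurable_lamperti (h : IsLampertiWeight μ φ w) (hp : p ≠ 0) (hε : Measurable ε)
    {g : S → ℝ} (hg : AEMeasurable g μ) : AEMeasurable (lamperti p φ w ε g) μ := by
  refine AEMeasurable.congr ?_ (h.lamperti_congr_ae hp hg.ae_eq_mk).symm
  exact ((hε.mul (h.measurable.pow_const _)).mul
    (hg.measurable_mk.comp h.measurable_map)).aemeasurable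

theorem eLpNorm_lamperti (h : IsLampertiWeight μ φ w) (hp : 0 < p) (hε1 : ∀ᵐ s ∂μ, |ε s| = 1)
    {g : S → ℝ} (hg : AEMeasurable g μ) :
    eLpNorm (lamperti p φ w ε g) (ENNReal.ofReal p) μ = eLpNorm g (ENNReal.ofReal p) μ := by
  have hp' : ENNReal.ofReal p ≠ 0 := (ENNReal.ofReal_pos.mpr hp).ne'
  rw [eLpNorm_eq_lintegral_rpow_enorm_toReal hp' ENNReal.ofReal_ne_top,
    eLpNorm_eq_lintegral_rpow_enorm_toReal hp' ENNReal.ofReal_ne_top, ENNReal.toReal_ofReal hp.le,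
    ← h.lintegral_comp_mul_of_aemeasurable (hg.enorm.pow_const p)]
  congr 1
  refine lintegral_congr_ae ?_
  filter_upwards [hε1] with s hεs
  exact enorm_mul_rpow_one_div_rpow hp hεs (h.nonneg s)

theorem memLp_lamperti (h : IsLampertiWeight μ φ w) (hp : 0 < p) (hε : Measurable ε)
    (hε1 : ∀ᵐ s ∂μ, |ε s| = 1) {g : S → ℝ} (hg : MemLp g (ENNReal.ofReal p) μ) :
    MemLp (lamperti p φ w ε g) (ENNReal.ofReal p) μ :=
  ⟨(h.aemeasurable_lamperti hp.ne' hε hg.1.aemeasurable).aestronglyMeasurable,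
    (h.eLpNorm_lamperti hp hε1 hg.1.aemeasurable).symm ▸ hg.2⟩

end IsLampertiWeight

-- For `n = 0` both logarithms are junk `Real.log 0 = 0`, so the identity needs `w = 0 ∨ a = 0`.
theorem mul_log_abs_mul_rpow_div {p e w a n : ℝ} (hp : p ≠ 0) (he : |e| = 1) (hw : 0 ≤ w)
    (hn : n ≠ 0 ∨ w = 0 ∨ a = 0) :
    e * w ^ (1 / p) * a * Real.log (|e * w ^ (1 / p) * a| / n)
      = e * w ^ (1 / p) * (a * Real.log (|a| / n))
        + 1 / p * Real.log w * (e * w ^ (1 / p) * a) := by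
  rcases hn with hn | rfl | rfl
  · rcases hw.eq_or_lt with rfl | hw
    · simp [Real.zero_rpow (inv_ne_zero hp)]
    rcases eq_or_ne a 0 with rfl | ha
    · simp
    have hlog : Real.log (|e * w ^ (1 / p) * a| / n) = 1 / p * Real.log w + Real.log (|a| / n) := by
      rw [abs_mul, abs_mul, he, one_mul, abs_of_pos (Real.rpow_pos_of_pos hw _), mul_div_assoc,
        Real.log_mul (Real.rpow_pos_of_pos hw _).ne' (div_ne_zero (abs_ne_zero.mpr ha) hn),
        Real.log_rpow hw]
    rw [hlog]
    ring
  · simp [Real.zero_rpow (inv_ne_zero hp)]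
  · simp

theorem kaltonPeck_lamperti_ae_eq {μ : Measure S} {φ : S → S} {w ε f : S → ℝ} {p : ℝ}
    (h : IsLampertiWeight μ φ w) (hp : 0 < p) (hε1 : ∀ᵐ s ∂μ, |ε s| = 1)
    (hf : MemLp f (ENNReal.ofReal p) μ) :
    kaltonPeck p μ (lamperti p φ w ε f)
      =ᵐ[μ] fun s => lamperti p φ w ε (kaltonPeck p μ f) s
        + 1 / p * Real.log (w s) * lamperti p φ w ε f s := by
  set n := (eLpNorm f (ENNReal.ofReal p) μ).toReal
  have hn : ∀ᵐ s ∂μ, n ≠ 0 ∨ w s = 0 ∨ f (φ s) = 0 := by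
    by_cases hn0 : n = 0
    · have hf0 : f =ᵐ[μ] 0 := (eLpNorm_eq_zero_iff hf.1 (ENNReal.ofReal_pos.mpr hp).ne').mp
        (((ENNReal.toReal_eq_zero_iff _).mp hn0).resolve_right hf.2.ne)
      filter_upwards [h.ae_eq_zero_or_comp hf0] with s hs
      exact Or.inr hs
    · exact Filter.Eventually.of_forall fun _ => Or.inl hn0
  filter_upwards [hε1, hn] with s hεs hns
  simp only [kaltonPeck, lamperti, h.eLpNorm_lamperti hp hε1 hf.1.aemeasurable]
  exact mul_log_abs_mul_rpow_div hp.ne' hεs (h.nonneg s) hns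

end

theorem stmt_12_general {S : Type*} [MeasurableSpace S] (μ : Measure S)
    (p : ℝ) (hp : 1 ≤ p)
    (φ : S ≃ᵐ S) (w : S → ℝ) (hw : Measurable w) (hw0 : ∀ s, 0 ≤ w s)
    (hpush : ∀ g : S → ℝ≥0∞, Measurable g →
      ∫⁻ s, g (φ s) * ENNReal.ofReal (w s) ∂μ = ∫⁻ s, g s ∂μ)
    (ε : S → ℝ) (hε : Measurable ε) (hε1 : ∀ᵐ s ∂μ, |ε s| = 1)
    -- an element (x, f) of the Kalton–Peck twisted sum Z_p(μ) ⊆ L⁰(μ) × L_p(μ)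
    (x : S → ℝ)
    (f : S → ℝ) (hf : MemLp f (ENNReal.ofReal p) μ)
    (hxf : MemLp (fun s => x s - kaltonPeck p μ f s) (ENNReal.ofReal p) μ) :
    -- Λ_T(x, f) again belongs to Z_p(μ) ...
    MemLp (fun s => ε s * w s ^ (1 / p) * f (φ s)) (ENNReal.ofReal p) μ ∧
    MemLp (fun s =>
        (ε s * w s ^ (1 / p) * x (φ s)
          + (if ε s * w s ^ (1 / p) * f (φ s) = 0 then 0
             else (1 / p) * Real.log (w s) * (ε s * w s ^ (1 / p) * f (φ s))))
        - kaltonPeck p μ (fun t => ε t * w t ^ (1 / p) * f (φ t)) s)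
      (ENNReal.ofReal p) μ ∧
    -- ... and the quasi-norm is preserved exactly: N(Λ_T(x,f)) = N(x,f)
    (eLpNorm (fun s =>
        (ε s * w s ^ (1 / p) * x (φ s)
          + (if ε s * w s ^ (1 / p) * f (φ s) = 0 then 0
             else (1 / p) * Real.log (w s) * (ε s * w s ^ (1 / p) * f (φ s))))
        - kaltonPeck p μ (fun t => ε t * w t ^ (1 / p) * f (φ t)) s)
      (ENNReal.ofReal p) μ).toReal
      + (eLpNorm (fun s => ε s * w s ^ (1 / p) * f (φ s)) (ENNReal.ofReal p) μ).toReal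
    = (eLpNorm (fun s => x s - kaltonPeck p μ f s) (ENNReal.ofReal p) μ).toReal
      + (eLpNorm f (ENNReal.ofReal p) μ).toReal := by
  have hp0 : 0 < p := by linarith
  have h : IsLampertiWeight μ φ w := ⟨φ.measurable, hw, hw0, hpush⟩
  rw [show (fun s => ε s * w s ^ (1 / p) * f (φ s)) = lamperti p φ w ε f from rfl]
  have hkey : (fun s =>
        (ε s * w s ^ (1 / p) * x (φ s)
          + (if ε s * w s ^ (1 / p) * f (φ s) = 0 then 0
             else (1 / p) * Real.log (w s) * (ε s * w s ^ (1 / p) * f (φ s))))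
        - kaltonPeck p μ (lamperti p φ w ε f) s)
      =ᵐ[μ] lamperti p φ w ε fun s => x s - kaltonPeck p μ f s := by
    filter_upwards [kaltonPeck_lamperti_ae_eq h hp0 hε1 hf] with s hs
    simp only [lamperti] at hs ⊢
    rw [hs, ite_eq_right_iff.mpr fun h0 => by rw [h0, mul_zero]]
    ring
  refine ⟨h.memLp_lamperti hp0 hε hε1 hf, (h.memLp_lamperti hp0 hε hε1 hxf).ae_eq hkey.symm, ?_⟩
  rw [eLpNorm_congr_ae hkey, h.eLpNorm_lamperti hp0 hε1 hxf.1.aemeasurable,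
    h.eLpNorm_lamperti hp0 hε1 hf.1.aemeasurable]

/-- the triangular map
`Λ_T(x,f) = (T̄x + (1/p)(log w)·(Tf), Tf)` associated to a Banach–Lamperti
operator `T` maps the Kalton–Peck twisted sum `Z_p(μ)` into itself and preserves
the twisted-sum quasi-norm `N(x,f) = ‖x − Kf‖_p + ‖f‖_p` exactly. -/
theorem stmt_12 {S : Type*} [MeasurableSpace S] (μ : Measure S) [SigmaFinite μ]
    (p : ℝ) (hp : 1 ≤ p)
    (φ : S ≃ᵐ S) (w : S → ℝ) (hw : Measurable w) (hw0 : ∀ s, 0 ≤ w s)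
    (hpush : ∀ g : S → ℝ≥0∞, Measurable g →
      ∫⁻ s, g (φ s) * ENNReal.ofReal (w s) ∂μ = ∫⁻ s, g s ∂μ)
    (ε : S → ℝ) (hε : Measurable ε) (hε1 : ∀ᵐ s ∂μ, |ε s| = 1)
    -- an element (x, f) of the Kalton–Peck twisted sum Z_p(μ) ⊆ L⁰(μ) × L_p(μ)
    (x : S → ℝ) (hx : AEMeasurable x μ)
    (f : S → ℝ) (hf : MemLp f (ENNReal.ofReal p) μ)
    (hxf : MemLp (fun s => x s - kaltonPeck p μ f s) (ENNReal.ofReal p) μ) :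
    -- Λ_T(x, f) again belongs to Z_p(μ) ...
    MemLp (fun s => ε s * w s ^ (1 / p) * f (φ s)) (ENNReal.ofReal p) μ ∧
    MemLp (fun s =>
        (ε s * w s ^ (1 / p) * x (φ s)
          + (if ε s * w s ^ (1 / p) * f (φ s) = 0 then 0
             else (1 / p) * Real.log (w s) * (ε s * w s ^ (1 / p) * f (φ s))))
        - kaltonPeck p μ (fun t => ε t * w t ^ (1 / p) * f (φ t)) s)
      (ENNReal.ofReal p) μ ∧
    -- ... and the quasi-norm is preserved exactly: N(Λ_T(x,f)) = N(x,f)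
    (eLpNorm (fun s =>
        (ε s * w s ^ (1 / p) * x (φ s)
          + (if ε s * w s ^ (1 / p) * f (φ s) = 0 then 0
             else (1 / p) * Real.log (w s) * (ε s * w s ^ (1 / p) * f (φ s))))
        - kaltonPeck p μ (fun t => ε t * w t ^ (1 / p) * f (φ t)) s)
      (ENNReal.ofReal p) μ).toReal
      + (eLpNorm (fun s => ε s * w s ^ (1 / p) * f (φ s)) (ENNReal.ofReal p) μ).toReal
    = (eLpNorm (fun s => x s - kaltonPeck p μ f s) (ENNReal.ofReal p) μ).toReal
      + (eLpNorm f (ENNReal.ofReal p) μ).toReal :=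
  stmt_12_general μ p hp φ w hw hw0 hpush ε hε hε1 x f hf hxf
end
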